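/- arXiv:1405.3375 — 2 statements merged into one kernel-verified Lean document; each statement's English description precedes it below -/
import Mathlib

section
/- Every Gorenstein weak injective module M satisfies Ext^i_R(W, M) = 0 for every weak injective R-module W and every i ≥ 1. -/
open CategoryTheory

universe u

noncomputable section

variable (R : Type u) [Ring R]

/-- Vanishing of `Ext^n_R(N, M)` for left `R`-modules, expressed via the `Ext` bifunctor
on the `ℤ`-linear abelian category `ModuleCat R`. -/
def ExtVanish (n : ℕ) (N M : ModuleCat.{u} R) : Prop :=
  Subsingleton (((_root_.Ext ℤ (ModuleCat.{u} R) n).obj (Opposite.op N)).obj M)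

/-- An `R`-module is super finitely presented if it admits a resolution by
finitely generated projective modules. -/
def SuperFinitelyPresented (N : ModuleCat.{u} R) : Prop :=
  ∃ (F : ℕ → ModuleCat.{u} R) (d : ∀ n, F (n + 1) →ₗ[R] F n) (ε : F 0 →ₗ[R] N),
    (∀ n, Module.Finite R (F n)) ∧ (∀ n, Module.Projective R (F n)) ∧
    Function.Surjective ε ∧ Function.Exact (d 0) ε ∧
    (∀ n, Function.Exact (d (n + 1)) (d n))

/-- An `R`-module `W` is weak injective if `Ext^1_R(N, W) = 0` for every super finitely
presented module `N`. -/
def WeakInjective (W : ModuleCat.{u} R) : Prop :=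
  ∀ N : ModuleCat.{u} R, SuperFinitelyPresented R N → ExtVanish R 1 N W

/-- `wid_R M ≤ n` : `Ext^{n+1}_R(N, M) = 0` for every super finitely presented `N`. -/
def WidLE (M : ModuleCat.{u} R) (n : ℕ) : Prop :=
  ∀ N : ModuleCat.{u} R, SuperFinitelyPresented R N → ExtVanish R (n + 1) N M

/-- The weak injective dimension, as an element of `ℕ∞`. -/
def Wid (M : ModuleCat.{u} R) : ℕ∞ :=
  sInf {c : ℕ∞ | ∃ n : ℕ, c = n ∧ WidLE R M n}

/-- A doubly infinite exact complex of injective modules which stays exact after applying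
`Hom_R(W, -)` for every module `W` in the test class `𝒯`. -/
def IsTotallyAcyclicInjComplex (𝒯 : ModuleCat.{u} R → Prop)
    (I : ℤ → ModuleCat.{u} R) (d : ∀ n : ℤ, I n →ₗ[R] I (n + 1)) : Prop :=
  (∀ n, Module.Injective R (I n)) ∧
  (∀ n, Function.Exact (d n) (d (n + 1))) ∧
  (∀ W : ModuleCat.{u} R, 𝒯 W → ∀ n,
    Function.Exact (fun g : W →ₗ[R] I n => (d n).comp g)
      (fun g : W →ₗ[R] I (n + 1) => (d (n + 1)).comp g))

/-- `M` is Gorenstein injective relative to the test class `𝒯` : `M` is the cokernel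
`Coker (I_1 → I_0)` of a `Hom(𝒯, -)`-exact exact complex of injective modules. -/
def GorensteinRelInjective (𝒯 : ModuleCat.{u} R → Prop) (M : ModuleCat.{u} R) : Prop :=
  ∃ (I : ℤ → ModuleCat.{u} R) (d : ∀ n : ℤ, I n →ₗ[R] I (n + 1)) (π : I 0 →ₗ[R] M),
    IsTotallyAcyclicInjComplex R 𝒯 I d ∧
    Function.Surjective π ∧ Function.Exact (d (-1)) π

/-- Gorenstein weak injective modules: the test class is that of weak injective modules. -/
def GorensteinWeakInjective (M : ModuleCat.{u} R) : Prop :=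
  GorensteinRelInjective R (WeakInjective R) M

/-- Gorenstein injective modules: the test class is that of injective modules. -/
def GorensteinInjective (M : ModuleCat.{u} R) : Prop :=
  GorensteinRelInjective R (fun E => Module.Injective R E) M

/-- The data of an exact sequence `0 → M → G^0 → ⋯ → G^n → 0` (the modules `G^i` for
`i > n` being trivial). -/
def IsFiniteCoresolution (M : ModuleCat.{u} R) (n : ℕ) (G : ℕ → ModuleCat.{u} R)
    (d : ∀ i, G i →ₗ[R] G (i + 1)) (ε : M →ₗ[R] G 0) : Prop :=
  Function.Injective ε ∧ Function.Exact ε (d 0) ∧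
  (∀ i, Function.Exact (d i) (d (i + 1))) ∧
  (∀ i, n < i → ∀ x : G i, x = 0)

/-- `Gwid_R M ≤ n` : `M` has a coresolution of length `n` by Gorenstein weak injective
modules. -/
def GwidLE (M : ModuleCat.{u} R) (n : ℕ) : Prop :=
  ∃ (G : ℕ → ModuleCat.{u} R) (d : ∀ i, G i →ₗ[R] G (i + 1)) (ε : M →ₗ[R] G 0),
    IsFiniteCoresolution R M n G d ε ∧ ∀ i, GorensteinWeakInjective R (G i)

/-- The Gorenstein weak injective dimension, as an element of `ℕ∞`. -/
def Gwid (M : ModuleCat.{u} R) : ℕ∞ :=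
  sInf {c : ℕ∞ | ∃ n : ℕ, c = n ∧ GwidLE R M n}

/-- `Gid_R M ≤ n`, via coresolutions by Gorenstein injective modules. -/
def GidLE (M : ModuleCat.{u} R) (n : ℕ) : Prop :=
  ∃ (G : ℕ → ModuleCat.{u} R) (d : ∀ i, G i →ₗ[R] G (i + 1)) (ε : M →ₗ[R] G 0),
    IsFiniteCoresolution R M n G d ε ∧ ∀ i, GorensteinInjective R (G i)

/-- The Gorenstein injective dimension, as an element of `ℕ∞`. -/
def Gid (M : ModuleCat.{u} R) : ℕ∞ :=
  sInf {c : ℕ∞ | ∃ n : ℕ, c = n ∧ GidLE R M n}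

/-- `id_R M ≤ n`, via coresolutions by injective modules. -/
def IdLE (M : ModuleCat.{u} R) (n : ℕ) : Prop :=
  ∃ (G : ℕ → ModuleCat.{u} R) (d : ∀ i, G i →ₗ[R] G (i + 1)) (ε : M →ₗ[R] G 0),
    IsFiniteCoresolution R M n G d ε ∧ ∀ i, Module.Injective R (G i)

/-- The injective dimension, as an element of `ℕ∞`. -/
def Idim (M : ModuleCat.{u} R) : ℕ∞ :=
  sInf {c : ℕ∞ | ∃ n : ℕ, c = n ∧ IdLE R M n}

/-- The data of an exact sequence `0 → P_n → ⋯ → P_0 → M → 0`. -/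
def IsFiniteResolution (M : ModuleCat.{u} R) (n : ℕ) (P : ℕ → ModuleCat.{u} R)
    (d : ∀ i, P (i + 1) →ₗ[R] P i) (ε : P 0 →ₗ[R] M) : Prop :=
  Function.Surjective ε ∧ Function.Exact (d 0) ε ∧
  (∀ i, Function.Exact (d (i + 1)) (d i)) ∧
  (∀ i, n < i → ∀ x : P i, x = 0)

/-- `pd_R M ≤ n`, via resolutions by projective modules. -/
def PdLE (M : ModuleCat.{u} R) (n : ℕ) : Prop :=
  ∃ (P : ℕ → ModuleCat.{u} R) (d : ∀ i, P (i + 1) →ₗ[R] P i) (ε : P 0 →ₗ[R] M),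
    IsFiniteResolution R M n P d ε ∧ ∀ i, Module.Projective R (P i)

end

variable (R : Type u) [Ring R]

/-- A short exact sequence `0 → L → M → N → 0` of `R`-modules. -/
def ShortExactSeq (L M N : ModuleCat.{u} R) (f : L →ₗ[R] M) (g : M →ₗ[R] N) : Prop :=
  Function.Injective f ∧ Function.Surjective g ∧ Function.Exact f g

/-- Exactness of `0 → Hom(C, X) → Hom(B, X) → Hom(A, X) → 0` induced by
`0 → A → B → C → 0`. -/
def HomContraExact (X : ModuleCat.{u} R) {A B C : ModuleCat.{u} R}
    (f : A →ₗ[R] B) (g : B →ₗ[R] C) : Prop :=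
  Function.Injective (fun h : C →ₗ[R] X => h.comp g) ∧
  Function.Exact (fun h : C →ₗ[R] X => h.comp g) (fun h : B →ₗ[R] X => h.comp f) ∧
  Function.Surjective (fun h : B →ₗ[R] X => h.comp f)

/-- A short exact sequence is `GWI`-copure exact if `Hom_R(-, X)` leaves it exact for
every Gorenstein weak injective module `X`. -/
def GWICopureExact {A B C : ModuleCat.{u} R} (f : A →ₗ[R] B) (g : B →ₗ[R] C) : Prop :=
  ShortExactSeq R A B C f g ∧
  ∀ X : ModuleCat.{u} R, GorensteinWeakInjective R X → HomContraExact R X f g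

/-- `M` is `GWI`-copure injective if `Hom_R(-, M)` is exact on every `GWI`-copure exact
sequence. -/
def GWICopureInjectiveMod (M : ModuleCat.{u} R) : Prop :=
  ∀ (A B C : ModuleCat.{u} R) (f : A →ₗ[R] B) (g : B →ₗ[R] C),
    GWICopureExact R f g → HomContraExact R M f g

/-- `φ : M → G` is a Gorenstein weak injective preenvelope of `M`. -/
def GWIPreenvelope (M G : ModuleCat.{u} R) (φ : M →ₗ[R] G) : Prop :=
  GorensteinWeakInjective R G ∧
  ∀ G' : ModuleCat.{u} R, GorensteinWeakInjective R G' →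
    ∀ f : M →ₗ[R] G', ∃ g : G →ₗ[R] G', g.comp φ = f

/-- A `WI`-pure Tate injective resolution of `M` : an injective resolution
`0 → M → E^0 → E^1 → ⋯`, a `WI`-pure exact complex `T` of injectives, and a chain map
`u : E → T` which is an isomorphism in all sufficiently large degrees. -/
def WIPureTateInjectiveResolution (M : ModuleCat.{u} R)
    (E : ℕ → ModuleCat.{u} R) (dE : ∀ n, E n →ₗ[R] E (n + 1)) (ε : M →ₗ[R] E 0)
    (T : ℤ → ModuleCat.{u} R) (dT : ∀ n : ℤ, T n →ₗ[R] T (n + 1))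
    (u : ∀ n : ℕ, E n →ₗ[R] T n) : Prop :=
  (∀ n, Module.Injective R (E n)) ∧ Function.Injective ε ∧
  Function.Exact ε (dE 0) ∧ (∀ n, Function.Exact (dE n) (dE (n + 1))) ∧
  IsTotallyAcyclicInjComplex R (WeakInjective R) T dT ∧
  (∀ n : ℕ, (dT n).comp (u n) = (u (n + 1)).comp (dE n)) ∧
  ∃ N : ℕ, ∀ n, N ≤ n → Function.Bijective (u n)

/-- Vanishing of the relative Tate cohomology `Êxt^i_GWI(N, M)` for all `i ∈ ℤ`,
computed from the `WI`-pure exact complex `T` : the complex `Hom_R(N, T)` is exact. -/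
def ExtHatVanishesAll (N : ModuleCat.{u} R) (T : ℤ → ModuleCat.{u} R)
    (dT : ∀ n : ℤ, T n →ₗ[R] T (n + 1)) : Prop :=
  ∀ n : ℤ, Function.Exact (fun g : N →ₗ[R] T n => (dT n).comp g)
    (fun g : N →ₗ[R] T (n + 1) => (dT (n + 1)).comp g)


/-! `M` is isomorphic to the cosyzygy `range (d 0) = ker (d 1)` of an exact complex `I` of
injectives that stays exact under `Hom_R(W, -)`. Every cosyzygy `K` sits in a short exact sequence
`0 → K → I n → K' → 0`, where `K'` is the next cosyzygy, and `Hom_R(W, I n) → Hom_R(W, K')` is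
onto. Since `Ext^{≥1}(W, I n)` vanishes, the long exact sequence gives `Ext^1(W, K) = 0` and
`Ext^{j+2}(W, K) ≅ Ext^{j+1}(W, K')`, so induction on `j`, over all cosyzygies at once, kills
`Ext^{j+1}(W, K)`. The long exact sequences are replaced by the corresponding diagram chases on
cocycles of `Hom_R(P, -)`, for a projective resolution `P` of `W`. -/

open LinearMap

universe w

section ExactSequences

variable {R : Type*} [Ring R] {W M N P : Type*} [AddCommGroup W] [Module R W]
  [AddCommGroup M] [Module R M] [AddCommGroup N] [Module R N] [AddCommGroup P] [Module R P]
  {f : M →ₗ[R] N} {g : N →ₗ[R] P}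

theorem Module.Injective.exists_comp_eq_of_exact [Small.{w} R] {J : Type w} [AddCommGroup J]
    [Module R J] [Module.Injective R J] (hfg : Function.Exact f g) (φ : N →ₗ[R] J)
    (hφ : φ ∘ₗ f = 0) : ∃ h : P →ₗ[R] J, h ∘ₗ g = φ := by
  obtain ⟨h, hh⟩ := Module.Injective.extension_property R J _ _ _
    (injective_range_liftQ_of_exact hfg) ((range f).liftQ φ (range_le_ker_iff.mpr hφ))
  exact ⟨h, LinearMap.ext fun x => LinearMap.congr_fun hh (Submodule.Quotient.mk x)⟩

theorem Function.Exact.exists_comp_eq_of_surjective (hfg : Function.Exact f g)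
    (hg : Function.Surjective g) (φ : N →ₗ[R] W) (hφ : φ ∘ₗ f = 0) :
    ∃ k : P →ₗ[R] W, k ∘ₗ g = φ :=
  ⟨(range f).liftQ φ (range_le_ker_iff.mpr hφ) ∘ₗ (hfg.linearEquivOfSurjective hg).symm,
    LinearMap.ext fun x => by simp⟩

theorem exists_rangeRestrict_comp_eq_of_exact_comp (hgf : g ∘ₗ f = 0)
    (hW : Function.Exact (fun ℓ : W →ₗ[R] M => f ∘ₗ ℓ) (fun k : W →ₗ[R] N => g ∘ₗ k))
    (k : W →ₗ[R] range f) : ∃ ℓ : W →ₗ[R] M, f.rangeRestrict ∘ₗ ℓ = k := by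
  obtain ⟨ℓ, hℓ⟩ := (hW ((range f).subtype ∘ₗ k)).mp <| by
    ext w
    obtain ⟨m, hm⟩ := (k w).2
    simp [← hm, ← LinearMap.comp_apply, hgf]
  exact ⟨ℓ, LinearMap.ext fun w => Subtype.ext congr($hℓ w)⟩

end ExactSequences

section CocyclesAreCoboundaries

variable {R : Type*} [Ring R] {P : ℕ → Type*} [∀ n, AddCommGroup (P n)] [∀ n, Module R (P n)]
  (d : ∀ n, P (n + 1) →ₗ[R] P n)

/-- `H^{j + 1}` of the cochain complex `Hom_R(P, M)` vanishes. -/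
def CocyclesAreCoboundaries (M : Type*) [AddCommGroup M] [Module R M] (j : ℕ) : Prop :=
  ∀ f : P (j + 1) →ₗ[R] M, f ∘ₗ d (j + 1) = 0 → ∃ g : P j →ₗ[R] M, g ∘ₗ d j = f

variable {d}

theorem CocyclesAreCoboundaries.of_linearEquiv {M N : Type*} [AddCommGroup M] [Module R M]
    [AddCommGroup N] [Module R N] {j : ℕ} (e : M ≃ₗ[R] N)
    (h : CocyclesAreCoboundaries d N j) : CocyclesAreCoboundaries d M j := by
  intro f hf
  obtain ⟨g, hg⟩ := h (e.toLinearMap ∘ₗ f) (by rw [comp_assoc, hf, comp_zero])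
  exact ⟨e.symm.toLinearMap ∘ₗ g, by rw [comp_assoc, hg]; ext; simp⟩

variable (d) {J : Type w} {J' : Type*} [AddCommGroup J] [Module R J] [AddCommGroup J']
  [Module R J'] (δ : J →ₗ[R] J')

theorem exists_comp_eq_ker_of_rangeRestrict_comp_eq {A B : Type*} [AddCommGroup A] [Module R A]
    [AddCommGroup B] [Module R B] {a : A →ₗ[R] B} {f : A →ₗ[R] ker δ} {h e : B →ₗ[R] J}
    (hh : h ∘ₗ a = (ker δ).subtype ∘ₗ f) (he : e ∘ₗ a = 0)
    (hδ : δ.rangeRestrict ∘ₗ e = δ.rangeRestrict ∘ₗ h) :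
    ∃ g : B →ₗ[R] ker δ, g ∘ₗ a = f := by
  refine ⟨(h - e).codRestrict (ker δ) fun x => ?_, LinearMap.ext fun x => Subtype.ext ?_⟩
  · rw [mem_ker, LinearMap.sub_apply, map_sub, sub_eq_zero]
    exact (congrArg Subtype.val (LinearMap.congr_fun hδ x)).symm
  · have hx : h (a x) = f x := LinearMap.congr_fun hh x
    have hex : e (a x) = 0 := LinearMap.congr_fun he x
    simp [hx, hex]

variable [Small.{w} R] [Module.Injective R J]

theorem cocyclesAreCoboundaries_ker_zero {W : Type*} [AddCommGroup W] [Module R W]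
    {ε : P 0 →ₗ[R] W} (hd : Function.Exact (d 1) (d 0)) (hε : Function.Exact (d 0) ε)
    (hε_surj : Function.Surjective ε)
    (hW : ∀ k : W →ₗ[R] range δ, ∃ ℓ : W →ₗ[R] J, δ.rangeRestrict ∘ₗ ℓ = k) :
    CocyclesAreCoboundaries d (ker δ) 0 := by
  intro f hf
  obtain ⟨h, hh⟩ := Module.Injective.exists_comp_eq_of_exact hd ((ker δ).subtype ∘ₗ f)
    (by rw [comp_assoc, hf, comp_zero])
  obtain ⟨k, hk⟩ := hε.exists_comp_eq_of_surjective hε_surj (δ.rangeRestrict ∘ₗ h)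
    (by rw [comp_assoc, hh, ← comp_assoc]; ext; simp)
  obtain ⟨ℓ, rfl⟩ := hW k
  exact exists_comp_eq_ker_of_rangeRestrict_comp_eq δ (e := ℓ ∘ₗ ε) hh
    (by rw [comp_assoc, hε.linearMap_comp_eq_zero, comp_zero]) (by rw [← hk]; rfl)

theorem cocyclesAreCoboundaries_ker_succ {j : ℕ} [Module.Projective R (P j)]
    (hd : Function.Exact (d (j + 1 + 1)) (d (j + 1))) (hdd : d j ∘ₗ d (j + 1) = 0)
    (hδ : CocyclesAreCoboundaries d (range δ) j) :
    CocyclesAreCoboundaries d (ker δ) (j + 1) := by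
  intro f hf
  obtain ⟨h, hh⟩ := Module.Injective.exists_comp_eq_of_exact hd ((ker δ).subtype ∘ₗ f)
    (by rw [comp_assoc, hf, comp_zero])
  obtain ⟨g, hg⟩ := hδ (δ.rangeRestrict ∘ₗ h) (by rw [comp_assoc, hh, ← comp_assoc]; ext; simp)
  obtain ⟨k, rfl⟩ :=
    Module.projective_lifting_property δ.rangeRestrict g δ.surjective_rangeRestrict
  exact exists_comp_eq_ker_of_rangeRestrict_comp_eq δ (e := k ∘ₗ d j) hh
    (by rw [comp_assoc, hdd, comp_zero]) (by rw [← hg]; rfl)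

end CocyclesAreCoboundaries

section GorensteinRelInjective

variable {R} {P : ℕ → Type*} [∀ n, AddCommGroup (P n)] [∀ n, Module R (P n)]
  {d : ∀ n, P (n + 1) →ₗ[R] P n} {𝒯 : ModuleCat.{u} R → Prop} {W : ModuleCat.{u} R}
  {ε : P 0 →ₗ[R] W}

theorem IsTotallyAcyclicInjComplex.cocyclesAreCoboundaries_range {I : ℤ → ModuleCat.{u} R}
    {dI : ∀ n : ℤ, I n →ₗ[R] I (n + 1)} (hI : IsTotallyAcyclicInjComplex R 𝒯 I dI) (hW : 𝒯 W)
    (hP : ∀ n, Module.Projective R (P n)) (hε : Function.Exact (d 0) ε)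
    (hε_surj : Function.Surjective ε) (hd : ∀ n, Function.Exact (d (n + 1)) (d n)) (j : ℕ)
    (n : ℤ) : CocyclesAreCoboundaries d (range (dI n)) j := by
  obtain ⟨hI_inj, hI_exact, hI_hom⟩ := hI
  have := hI_inj (n + 1)
  rw [← (hI_exact n).linearMap_ker_eq]
  induction j generalizing n with
  | zero =>
    exact cocyclesAreCoboundaries_ker_zero d (dI (n + 1)) (hd 0) hε hε_surj
      (exists_rangeRestrict_comp_eq_of_exact_comp (hI_exact (n + 1)).linearMap_comp_eq_zero
        (hI_hom W hW (n + 1)))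
  | succ j ih =>
    have := hP j
    exact cocyclesAreCoboundaries_ker_succ d (dI (n + 1)) (hd (j + 1))
      (hd j).linearMap_comp_eq_zero ((hI_exact (n + 1)).linearMap_ker_eq ▸ ih (n + 1) (hI_inj _))

theorem GorensteinRelInjective.cocyclesAreCoboundaries {M : ModuleCat.{u} R}
    (hM : GorensteinRelInjective R 𝒯 M) (hW : 𝒯 W) (hP : ∀ n, Module.Projective R (P n))
    (hε : Function.Exact (d 0) ε) (hε_surj : Function.Surjective ε)
    (hd : ∀ n, Function.Exact (d (n + 1)) (d n)) (j : ℕ) : CocyclesAreCoboundaries d M j := by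
  obtain ⟨I, dI, π, hI, hπ_surj, hπ⟩ := hM
  have hI₀ : Function.Exact (dI (-1)) (dI 0).rangeRestrict := fun x => by
    simpa [Subtype.ext_iff] using hI.2.1 (-1) x
  exact (hI.cocyclesAreCoboundaries_range hW hP hε hε_surj hd j 0).of_linearEquiv
    ((hπ.linearEquivOfSurjective hπ_surj).symm ≪≫ₗ
      hI₀.linearEquivOfSurjective (dI 0).surjective_rangeRestrict)

end GorensteinRelInjective

namespace CategoryTheory.ProjectiveResolution

variable {R} {W : ModuleCat.{u} R} (P : ProjectiveResolution W)

theorem surjective_π : Function.Surjective (P.π.f 0).hom :=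
  (ModuleCat.epi_iff_surjective _).mp inferInstance

theorem exact_d_π : Function.Exact (P.complex.d 1 0).hom (P.π.f 0).hom :=
  (ShortComplex.ShortExact.moduleCat_exact_iff_function_exact _).mp P.exact₀

theorem exact_d_d (n : ℕ) :
    Function.Exact (P.complex.d (n + 2) (n + 1)).hom (P.complex.d (n + 1) n).hom :=
  (ShortComplex.ShortExact.moduleCat_exact_iff_function_exact _).mp (P.exact_succ n)

theorem extVanish_succ {M : ModuleCat.{u} R} {j : ℕ}
    (h : CocyclesAreCoboundaries (P := fun n => P.complex.X n)
      (fun n => (P.complex.d (n + 1) n).hom) M j) :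
    ExtVanish R (j + 1) W M := by
  rw [ExtVanish, ← ModuleCat.isZero_iff_subsingleton]
  refine Limits.IsZero.of_iso ?_ (P.isoExt (j + 1) M)
  rw [← HomologicalComplex.exactAt_iff_isZero_homology,
    HomologicalComplex.exactAt_iff' _ j (j + 1) (j + 2) (by simp) (by simp),
    ShortComplex.moduleCat_exact_iff]
  intro x hx
  obtain ⟨g, hg⟩ :=
    h x.hom (congrArg ModuleCat.Hom.hom (hx : P.complex.d (j + 2) (j + 1) ≫ x = 0))
  exact ⟨ModuleCat.ofHom g, ModuleCat.hom_ext hg⟩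

end CategoryTheory.ProjectiveResolution

/-- Every Gorenstein weak injective module `M` satisfies `Ext^i_R(W, M) = 0` for every
weak injective module `W` and every `i ≥ 1`. -/
theorem gorensteinWeakInjective_extVanish (M : ModuleCat.{u} R)
    (hM : GorensteinWeakInjective R M) :
    ∀ W : ModuleCat.{u} R, WeakInjective R W → ∀ i : ℕ, 1 ≤ i → ExtVanish R i W M := by
  intro W hW i hi
  obtain ⟨j, rfl⟩ : ∃ j, i = j + 1 := ⟨i - 1, by omega⟩
  let P := projectiveResolution W
  exact P.extVanish_succ (hM.cocyclesAreCoboundaries hW (fun _ => inferInstance) P.exact_d_π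
    P.surjective_π P.exact_d_d j)
end

section
/- A Gorenstein weak injective R-module is either injective or has infinite weak injective dimension. Consequently, the intersection of the class of Gorenstein weak injective modules with the class of modules of finite weak injective dimension is exactly the class of injective modules. -/
open CategoryTheory

universe u

variable (R : Type u) [Ring R]

/-!
Write a Gorenstein weak injective `M` as the image `Z⁰` of `d⁰` in an exact complex `T` of
injectives that stays exact under `Hom(W, -)` for every weak injective `W`, and let `Zʲ = im dʲ`.
Dimension shifting along `0 → Zʲ → Tʲ⁺¹ → Zʲ⁺¹ → 0` turns `Extⁿ⁺¹(N, Z⁰) = 0` into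
`Ext¹(N, Zⁿ) = 0`: if `wid M ≤ n`, then `Zⁿ` is weak injective. `Hom(Zⁿ, -)`-exactness of `T`
then lifts the inclusion `Zⁿ ⊆ Tⁿ⁺¹` to a section of `Tⁿ → Zⁿ`, so `0 → Zⁿ⁻¹ → Tⁿ → Zⁿ → 0`
splits and `Zⁿ⁻¹` is injective, hence weak injective. Descending, `M ≅ Z⁰` is a direct summand
of `T⁰`. Conversely, an injective `M` is Gorenstein weak injective through the complex
`⋯ → M --id→ M --0→ M --id→ M → ⋯`.
-/

section

variable {R}

section Ext

variable {N M : ModuleCat.{u} R}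

lemma extVanish_succ_iff (P : ProjectiveResolution N) (m : ℕ) :
    ExtVanish R (m + 1) N M ↔
      ∀ φ : P.complex.X (m + 1) ⟶ M, P.complex.d (m + 2) (m + 1) ≫ φ = 0 →
        ∃ ψ : P.complex.X m ⟶ M, P.complex.d (m + 1) m ≫ ψ = φ := by
  rw [ExtVanish, ← ModuleCat.isZero_iff_subsingleton, (P.isoExt (m + 1) M).isZero_iff,
    ← HomologicalComplex.exactAt_iff_isZero_homology,
    HomologicalComplex.exactAt_iff' _ m (m + 1) (m + 2) (by simp) (by simp),
    ShortComplex.moduleCat_exact_iff]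
  rfl

lemma exists_d_comp_eq_of_injective [Injective M] (P : ProjectiveResolution N) (m : ℕ)
    (φ : P.complex.X (m + 1) ⟶ M) (hφ : P.complex.d (m + 2) (m + 1) ≫ φ = 0) :
    ∃ ψ : P.complex.X m ⟶ M, P.complex.d (m + 1) m ≫ ψ = φ :=
  have hP := (P.complex.exactAt_iff' (m + 2) (m + 1) m (by simp) (by simp)).mp
    (P.complex_exactAt_succ m)
  ⟨hP.descToInjective φ hφ, hP.comp_descToInjective φ hφ⟩

lemma extVanish_succ_of_injective [Injective M] (m : ℕ) : ExtVanish R (m + 1) N M :=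
  (extVanish_succ_iff (projectiveResolution N) m).mpr
    (exists_d_comp_eq_of_injective _ m)

lemma ExtVanish.of_iso {n : ℕ} {M' : ModuleCat.{u} R} (e : M ≅ M') (h : ExtVanish R n N M) :
    ExtVanish R n N M' := by
  rw [ExtVanish, ← ModuleCat.isZero_iff_subsingleton] at h ⊢
  exact h.of_iso (((Ext ℤ (ModuleCat.{u} R) n).obj (Opposite.op N)).mapIso e).symm

lemma ExtVanish.of_shortExact_of_injective {S : ShortComplex (ModuleCat.{u} R)}
    (hS : S.ShortExact) [Injective S.X₂] {m : ℕ} (h : ExtVanish R (m + 2) N S.X₁) :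
    ExtVanish R (m + 1) N S.X₃ := by
  let P := projectiveResolution N
  have hP := (extVanish_succ_iff P (m + 1)).mp h
  refine (extVanish_succ_iff P m).mpr fun φ hφ => ?_
  have := hS.epi_g
  have := hS.mono_f
  let φ' := Projective.factorThru φ S.g
  obtain ⟨α, hα⟩ : ∃ α, α ≫ S.f = P.complex.d (m + 2) (m + 1) ≫ φ' :=
    ⟨hS.exact.lift _ (by simp [φ', hφ]), hS.exact.lift_f _ _⟩
  obtain ⟨β, hβ⟩ := hP α (by rw [← cancel_mono S.f]; simp [hα])
  obtain ⟨ψ, hψ⟩ := exists_d_comp_eq_of_injective P m (φ' - β ≫ S.f)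
    (by rw [Preadditive.comp_sub, reassoc_of% hβ, hα, sub_self])
  exact ⟨ψ ≫ S.g, by simp [reassoc_of% hψ, φ']⟩

end Ext

lemma widLE_of_injective {E : ModuleCat.{u} R} [Injective E] (n : ℕ) : WidLE R E n :=
  fun _ _ => extVanish_succ_of_injective n

lemma weakInjective_of_injective {E : ModuleCat.{u} R} [Injective E] : WeakInjective R E :=
  widLE_of_injective 0

lemma exact_ite_even_id_zero {X : Type*} [Zero X] (n : ℤ) :
    Function.Exact (if Even n then id else 0 : X → X) (if Even (n + 1) then id else 0) := by
  by_cases hn : Even n <;> simp [hn, ← Int.not_even_iff_odd, Function.Exact]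

lemma gorensteinRelInjective_of_injective (𝒯 : ModuleCat.{u} R → Prop) {M : ModuleCat.{u} R}
    (hM : Module.Injective R M) : GorensteinRelInjective R 𝒯 M := by
  let d : ∀ n : ℤ, M →ₗ[R] M := fun n => if Even n then LinearMap.id else 0
  have hd : ∀ n, ⇑(d n) = if Even n then id else 0 := fun n => by
    unfold d; split_ifs <;> rfl
  have hcomp : ∀ (W : ModuleCat.{u} R) n,
      (fun g : W →ₗ[R] M => (d n).comp g) = if Even n then id else 0 := fun W n => by
    unfold d; split_ifs <;> ext <;> simp
  refine ⟨fun _ => M, d, LinearMap.id, ⟨fun _ => hM, fun n => ?_, fun W _ n => ?_⟩,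
    Function.surjective_id, ?_⟩
  · rw [hd, hd]; exact exact_ite_even_id_zero n
  · rw [hcomp, hcomp]; exact exact_ite_even_id_zero n
  · simp [hd, Function.Exact]

section Cosyzygy

variable {T : ℤ → ModuleCat.{u} R} {d : ∀ n : ℤ, T n →ₗ[R] T (n + 1)}

variable (d) in
abbrev cosyzygy (j : ℤ) : ModuleCat.{u} R :=
  ModuleCat.of R (LinearMap.range (d j))

abbrev cosyzygyShortComplex {j : ℤ} (h : Function.Exact (d j) (d (j + 1))) :
    ShortComplex (ModuleCat.{u} R) :=
  ShortComplex.moduleCatMk (LinearMap.range (d j)).subtype (d (j + 1)).rangeRestrict <| by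
    ext ⟨_, x, rfl⟩
    exact h.apply_apply_eq_zero x

lemma cosyzygyShortComplex_shortExact {j : ℤ} (h : Function.Exact (d j) (d (j + 1))) :
    (cosyzygyShortComplex h).ShortExact := by
  have hg : Epi (cosyzygyShortComplex h).g :=
    (ModuleCat.epi_iff_surjective _).mpr (LinearMap.surjective_rangeRestrict (d (j + 1)))
  have hf : Mono (cosyzygyShortComplex h).f :=
    (ModuleCat.mono_iff_injective _).mpr (Submodule.injective_subtype _)
  refine .mk' ?_ hf hg
  rw [ShortComplex.moduleCat_exact_iff_range_eq_ker]
  exact (Submodule.range_subtype _).trans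
    ((LinearMap.exact_iff.mp h).symm.trans (LinearMap.ker_rangeRestrict _).symm)

lemma extVanish_cosyzygy_add (hinj : ∀ n, Module.Injective R (T n))
    (hex : ∀ n, Function.Exact (d n) (d (n + 1))) {N : ModuleCat.{u} R} (i : ℤ) (j k : ℕ)
    (h : ExtVanish R (k + j + 1) N (cosyzygy d i)) :
    ExtVanish R (k + 1) N (cosyzygy d (i + j)) := by
  induction j generalizing k with
  | zero => simpa using h
  | succ j ih =>
    have hS := cosyzygyShortComplex_shortExact (hex (i + j))
    have : Injective (cosyzygyShortComplex (hex (i + j))).X₂ :=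
      Module.injective_object_of_injective_module R (T (i + j + 1))
    have hj := ih (k + 1) (by rwa [show k + 1 + j + 1 = k + (j + 1) + 1 by omega])
    rw [Nat.cast_succ, ← add_assoc]
    exact hj.of_shortExact_of_injective hS

variable {𝒯 : ModuleCat.{u} R → Prop}

lemma exists_rangeRestrict_comp_eq_id (hT : IsTotallyAcyclicInjComplex R 𝒯 T d) {j : ℤ}
    (hj : 𝒯 (cosyzygy d j)) :
    ∃ s : LinearMap.range (d j) →ₗ[R] T j, (d j).rangeRestrict ∘ₗ s = LinearMap.id := by
  obtain ⟨s, hs⟩ := (hT.2.2 _ hj j (LinearMap.range (d j)).subtype).mp <| by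
    ext ⟨_, x, rfl⟩
    exact (hT.2.1 j).apply_apply_eq_zero x
  exact ⟨s, LinearMap.ext fun x => Subtype.ext (LinearMap.congr_fun hs x)⟩

lemma injective_cosyzygy (hT : IsTotallyAcyclicInjComplex R 𝒯 T d) {j : ℤ}
    (hj : 𝒯 (cosyzygy d j)) : Injective (cosyzygy d j) := by
  obtain ⟨s, hs⟩ := exists_rangeRestrict_comp_eq_id hT hj
  have := Module.injective_object_of_injective_module R (T j) (inj := hT.1 j)
  exact Retract.injective
    { i := ModuleCat.ofHom s, r := ModuleCat.ofHom (d j).rangeRestrict,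
      retract := ModuleCat.hom_ext hs }

lemma injective_cosyzygy_of_succ (hT : IsTotallyAcyclicInjComplex R 𝒯 T d) {j : ℤ}
    (hj : 𝒯 (cosyzygy d (j + 1))) : Injective (cosyzygy d j) := by
  obtain ⟨s, hs⟩ := exists_rangeRestrict_comp_eq_id hT hj
  have hS := cosyzygyShortComplex_shortExact (hT.2.1 j)
  let σ := ShortComplex.Splitting.ofExactOfSection _ hS.exact (ModuleCat.ofHom s)
    (ModuleCat.hom_ext hs) hS.mono_f
  have : Injective (cosyzygyShortComplex (hT.2.1 j)).X₂ :=
    Module.injective_object_of_injective_module R (T (j + 1)) (inj := hT.1 (j + 1))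
  exact Retract.injective ⟨_, σ.r, σ.f_r⟩

lemma weakInjective_cosyzygy_of_add (hT : IsTotallyAcyclicInjComplex R (WeakInjective R) T d)
    (j : ℤ) (i : ℕ) (h : WeakInjective R (cosyzygy d (j + i))) :
    WeakInjective R (cosyzygy d j) := by
  induction i generalizing j with
  | zero => simpa using h
  | succ i ih =>
    have := injective_cosyzygy_of_succ hT <|
      ih (j + 1) (by rwa [show j + 1 + i = j + ↑(i + 1) by push_cast; ring])
    exact weakInjective_of_injective

end Cosyzygy

lemma injective_of_gorensteinWeakInjective_of_widLE {M : ModuleCat.{u} R}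
    (hM : GorensteinWeakInjective R M) {n : ℕ} (hn : WidLE R M n) : Injective M := by
  obtain ⟨T, d, π, hT, hπ, hdπ⟩ := hM
  have hker : LinearMap.ker π = LinearMap.ker (d 0) :=
    (LinearMap.exact_iff.mp hdπ).trans (LinearMap.exact_iff.mp (hT.2.1 (-1))).symm
  let e : M ≅ cosyzygy d 0 := LinearEquiv.toModuleIso <|
    (π.quotKerEquivOfSurjective hπ).symm ≪≫ₗ Submodule.quotEquivOfEq _ _ hker ≪≫ₗ
      (d 0).quotKerEquivRange
  have hZn : WeakInjective R (cosyzygy d (0 + n)) := fun N hN =>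
    extVanish_cosyzygy_add hT.1 hT.2.1 0 n 0 (by simpa using (hn N hN).of_iso e)
  exact Injective.of_iso e.symm (injective_cosyzygy hT (weakInjective_cosyzygy_of_add hT 0 n hZn))

end

/-- A Gorenstein weak injective module is either injective or has infinite weak injective
dimension; consequently `GWI ∩ {finite weak injective dimension} = {injectives}`. -/
theorem gorensteinWeakInjective_injective_or_wid_infinite :
    (∀ M : ModuleCat.{u} R, GorensteinWeakInjective R M →
      Module.Injective R M ∨ ¬ ∃ n : ℕ, WidLE R M n) ∧
    (∀ M : ModuleCat.{u} R,
      (GorensteinWeakInjective R M ∧ ∃ n : ℕ, WidLE R M n) ↔ Module.Injective R M) := by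
  have key : ∀ M : ModuleCat.{u} R, GorensteinWeakInjective R M → (∃ n : ℕ, WidLE R M n) →
      Module.Injective R M := fun M hM ⟨_, hn⟩ =>
    Module.injective_module_of_injective_object R M
      (inj := injective_of_gorensteinWeakInjective_of_widLE hM hn)
  refine ⟨fun M hM => or_not_of_imp (key M hM), fun M => ⟨fun ⟨hM, hn⟩ => key M hM hn, ?_⟩⟩
  intro hM
  have := Module.injective_object_of_injective_module R M
  exact ⟨gorensteinRelInjective_of_injective _ hM, 0, widLE_of_injective 0⟩
end
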